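/- Let Δ be a matroid of rank d on [n] with [d] a basis, and suppose h_d(Δ) ≠ 0 (equivalently, Δ has no coloop). If I is an independent set disjoint from [d] such that h_{d−|I|}(Γ_I) = 0 (equivalently, Γ_I is a cone), then there exists z ∈ [n] \ ([d] ∪ I) such that I ∪ {z} is independent in Δ. -/
import Mathlib


/-- A matroid independence system on ground set `Finset.range n`. -/
def IsMatroidOn (n : ℕ) (Indep : Finset ℕ → Prop) : Prop :=
  Indep ∅ ∧
  (∀ I, Indep I → I ⊆ Finset.range n) ∧
  (∀ I J, I ⊆ J → Indep J → Indep I) ∧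
  (∀ I J, Indep I → Indep J → I.card < J.card → ∃ v ∈ J \ I, Indep (insert v I))

/-- `B` is a basis: a maximal independent set. -/
def IsBasisOf (Indep : Finset ℕ → Prop) (B : Finset ℕ) : Prop :=
  Indep B ∧ ∀ C, Indep C → B ⊆ C → C = B

/-- Lexicographic order on finite subsets of ℕ: the smallest element where the
two sets differ belongs to the smaller set. -/
def lexLt (A B : Finset ℕ) : Prop :=
  ∃ m, m ∈ A ∧ m ∉ B ∧ ∀ k, k < m → (k ∈ A ↔ k ∈ B)

/-- Restriction set of a basis `B` in the lexicographic shelling: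
`R(B) = {x ∈ B : (B \ {x}) ∪ {y} is a basis for some y < x}`. -/
noncomputable def restrSet (Indep : Finset ℕ → Prop) (B : Finset ℕ) : Finset ℕ :=
  @Finset.filter _ (fun x => ∃ y, y < x ∧ IsBasisOf Indep (insert y (B.erase x)))
    (Classical.decPred _) B

/-- The finite set of bases of a matroid on ground set `Finset.range n`. -/
noncomputable def basesOf (Indep : Finset ℕ → Prop) (n : ℕ) : Finset (Finset ℕ) :=
  @Finset.filter _ (IsBasisOf Indep) (Classical.decPred _) (Finset.range n).powerset

/-- The number of bases. -/
noncomputable def numBases (Indep : Finset ℕ → Prop) (n : ℕ) : ℕ := (basesOf Indep n).card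

/-- The `i`-th entry of the h-vector: the number of bases whose restriction set
in the lexicographic shelling has cardinality `i`. -/
noncomputable def hVec (Indep : Finset ℕ → Prop) (n i : ℕ) : ℕ :=
  (@Finset.filter _ (fun B => (restrSet Indep B).card = i) (Classical.decPred _)
    (basesOf Indep n)).card

/-- The independence predicate of the matroid `Γ_I` on ground set `Finset.range d`:
`G` is independent iff `G ⊆ [d]` and `G ∪ I` is independent in the ambient matroid. -/
def GammaIndep (Indep : Finset ℕ → Prop) (d : ℕ) (I : Finset ℕ) : Finset ℕ → Prop :=
  fun G => G ⊆ Finset.range d ∧ Indep (G ∪ I)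

section Aux
variable {N : ℕ} {Ind : Finset ℕ → Prop}

lemma indep_card_le (hM : IsMatroidOn N Ind) {B J : Finset ℕ}
    (hB : IsBasisOf Ind B) (hJ : Ind J) : J.card ≤ B.card := by
  by_contra h
  push_neg at h
  obtain ⟨v, hv, hvi⟩ := hM.2.2.2 B J hB.1 hJ h
  rw [Finset.mem_sdiff] at hv
  have := hB.2 _ hvi (Finset.subset_insert _ _)
  exact hv.2 (this ▸ Finset.mem_insert_self v B)

lemma basis_card_eq (hM : IsMatroidOn N Ind) {B C : Finset ℕ}
    (hB : IsBasisOf Ind B) (hC : IsBasisOf Ind C) : B.card = C.card :=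
  le_antisymm (indep_card_le hM hC hB.1) (indep_card_le hM hB hC.1)

lemma basis_of_indep_card (hM : IsMatroidOn N Ind) {B J : Finset ℕ}
    (hB : IsBasisOf Ind B) (hJ : Ind J) (hcard : B.card ≤ J.card) : IsBasisOf Ind J := by
  refine ⟨hJ, fun C hC hJC => ?_⟩
  exact (Finset.eq_of_subset_of_card_le hJC
    (le_trans (indep_card_le hM hB hC) hcard)).symm

lemma extend_to_basis (hM : IsMatroidOn N Ind) {B : Finset ℕ} (hB : IsBasisOf Ind B) :
    ∀ (k : ℕ) (J : Finset ℕ), Ind J → B.card - J.card ≤ k →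
      ∃ B', IsBasisOf Ind B' ∧ J ⊆ B' ∧ B' ⊆ J ∪ B := by
  intro k
  induction k with
  | zero =>
    intro J hJ hk
    exact ⟨J, basis_of_indep_card hM hB hJ (by omega), Finset.Subset.refl _,
      Finset.subset_union_left⟩
  | succ k ih =>
    intro J hJ hk
    by_cases h : B.card ≤ J.card
    · exact ⟨J, basis_of_indep_card hM hB hJ h, Finset.Subset.refl _,
        Finset.subset_union_left⟩
    · push_neg at h
      obtain ⟨v, hv, hvi⟩ := hM.2.2.2 J B hJ hB.1 h
      rw [Finset.mem_sdiff] at hv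
      obtain ⟨B', hB', h1, h2⟩ := ih (insert v J) hvi (by
        rw [Finset.card_insert_of_notMem hv.2]; omega)
      refine ⟨B', hB', (Finset.subset_insert _ _).trans h1, h2.trans ?_⟩
      intro z hz
      rcases Finset.mem_union.mp hz with hz | hz
      · rcases Finset.mem_insert.mp hz with rfl | hz
        · exact Finset.mem_union_right _ hv.1
        · exact Finset.mem_union_left _ hz
      · exact Finset.mem_union_right _ hz

lemma mem_basesOf (hM : IsMatroidOn N Ind) {B : Finset ℕ} :
    B ∈ basesOf Ind N ↔ IsBasisOf Ind B := by
  simp only [basesOf, Finset.mem_filter, Finset.mem_powerset]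
  exact ⟨fun h => h.2, fun h => ⟨hM.2.1 _ h.1, h⟩⟩

lemma restrSet_subset' {B : Finset ℕ} {x : ℕ}
    (hx : x ∈ restrSet Ind B) : x ∈ B := by
  simp only [restrSet, Finset.mem_filter] at hx
  exact hx.1

lemma mem_restrSet {B : Finset ℕ} {x : ℕ} :
    x ∈ restrSet Ind B ↔ x ∈ B ∧ ∃ y, y < x ∧ IsBasisOf Ind (insert y (B.erase x)) := by
  simp only [restrSet, Finset.mem_filter]

/-- From `h_top ≠ 0`: every element is avoided by some basis. -/
lemma no_coloop_of_htop (hM : IsMatroidOn N Ind) {r : ℕ}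
    (hd : hVec Ind N r ≠ 0) (hr : ∀ B, IsBasisOf Ind B → B.card = r) :
    ∀ x, ∃ C, IsBasisOf Ind C ∧ x ∉ C := by
  unfold hVec at hd
  obtain ⟨B, hBmem⟩ := Finset.card_ne_zero.mp hd
  simp only [Finset.mem_filter] at hBmem
  have hBbasis : IsBasisOf Ind B := (mem_basesOf hM).mp hBmem.1
  have hfull : restrSet Ind B = B := by
    have hsub : restrSet Ind B ⊆ B := fun z hz => restrSet_subset' hz
    have h3 : B.card ≤ (restrSet Ind B).card := by rw [hBmem.2, hr B hBbasis]
    exact Finset.eq_of_subset_of_card_le hsub h3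
  intro x
  by_cases hx : x ∈ B
  · have := hfull ▸ hx
    obtain ⟨-, y, hy, hybasis⟩ := mem_restrSet.mp this
    refine ⟨_, hybasis, ?_⟩
    simp only [Finset.mem_insert, Finset.mem_erase]
    rintro (rfl | ⟨h1, -⟩) <;> omega
  · exact ⟨B, hBbasis, hx⟩

/-- If every element is avoided by some basis, then `h_top ≠ 0`. -/
lemma htop_ne_zero (hM : IsMatroidOn N Ind) {B0 : Finset ℕ} (hB0 : IsBasisOf Ind B0)
    (hnc : ∀ x, ∃ C, IsBasisOf Ind C ∧ x ∉ C) : hVec Ind N B0.card ≠ 0 := by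
  classical
  -- pick a basis minimizing the weight ∑ 2^(N-k)
  have hne : (basesOf Ind N).Nonempty := ⟨B0, (mem_basesOf hM).mpr hB0⟩
  obtain ⟨B, hBmem, hmin⟩ := Finset.exists_min_image (basesOf Ind N)
    (fun B => ∑ k ∈ B, 2 ^ (N - k)) hne
  have hBbasis : IsBasisOf Ind B := (mem_basesOf hM).mp hBmem
  have hBsub : B ⊆ Finset.range N := hM.2.1 _ hBbasis.1
  have hfull : restrSet Ind B = B := by
    apply Finset.Subset.antisymm (fun z hz => restrSet_subset' hz)
    intro x hx
    obtain ⟨C, hC, hxC⟩ := hnc x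
    have hCsub : C ⊆ Finset.range N := hM.2.1 _ hC.1
    have hex : Ind (B.erase x) := hM.2.2.1 _ _ (Finset.erase_subset _ _) hBbasis.1
    have hcard : (B.erase x).card < C.card := by
      rw [Finset.card_erase_of_mem hx, ← basis_card_eq hM hBbasis hC]
      have : 0 < B.card := Finset.card_pos.mpr ⟨x, hx⟩
      omega
    obtain ⟨y, hy, hyi⟩ := hM.2.2.2 _ _ hex hC.1 hcard
    rw [Finset.mem_sdiff] at hy
    have hyx : y ≠ x := fun h => hxC (h ▸ hy.1)
    have hyB : y ∉ B := fun h => hy.2 (Finset.mem_erase.mpr ⟨hyx, h⟩)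
    have hins : IsBasisOf Ind (insert y (B.erase x)) := by
      apply basis_of_indep_card hM hBbasis hyi
      rw [Finset.card_insert_of_notMem hy.2, Finset.card_erase_of_mem hx]
      have : 0 < B.card := Finset.card_pos.mpr ⟨x, hx⟩
      omega
    have hxN : x < N := Finset.mem_range.mp (hBsub hx)
    have hyN : y < N := Finset.mem_range.mp (hCsub hy.1)
    have hyltx : y < x := by
      by_contra hcon
      push_neg at hcon
      have hxy : x < y := lt_of_le_of_ne hcon (Ne.symm hyx)
      -- weight strictly decreases, contradicting minimality
      have hmem' : insert y (B.erase x) ∈ basesOf Ind N := (mem_basesOf hM).mpr hins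
      have hle := hmin _ hmem'
      have h1 : ∑ k ∈ insert y (B.erase x), 2 ^ (N - k)
          = 2 ^ (N - y) + ∑ k ∈ B.erase x, 2 ^ (N - k) :=
        Finset.sum_insert hy.2
      have h2 : 2 ^ (N - x) + ∑ k ∈ B.erase x, 2 ^ (N - k) = ∑ k ∈ B, 2 ^ (N - k) :=
        Finset.add_sum_erase B (fun k => 2 ^ (N - k)) hx
      have hpow : (2:ℕ) ^ (N - y) < 2 ^ (N - x) := by
        apply Nat.pow_lt_pow_right (by norm_num)
        omega
      omega
    exact mem_restrSet.mpr ⟨hx, y, hyltx, hins⟩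
  -- conclude hVec ≠ 0
  have hcard : (restrSet Ind B).card = B0.card := by
    rw [hfull, basis_card_eq hM hBbasis hB0]
  unfold hVec
  apply Finset.card_ne_zero.mpr
  refine ⟨B, ?_⟩
  simp only [Finset.mem_filter]
  exact ⟨hBmem, hcard⟩
end Aux

/-- Going-up lemma: if `h_d(Δ) ≠ 0` and `I` is independent, disjoint from `[d]`,
with `h_{d-|I|}(Γ_I) = 0`, then `I` extends by a new vertex outside `[d] ∪ I`. -/
theorem stmt_6 (n d : ℕ) (Indep : Finset ℕ → Prop)
    (hM : IsMatroidOn n Indep) (hB : IsBasisOf Indep (Finset.range d))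
    (hd : hVec Indep n d ≠ 0)
    (I : Finset ℕ) (hI : Indep I) (hdisj : Disjoint I (Finset.range d))
    (hG : hVec (GammaIndep Indep d I) d (d - I.card) = 0) :
    ∃ z ∈ Finset.range n, z ∉ Finset.range d ∧ z ∉ I ∧ Indep (insert z I) := by
  classical
  set Γ := GammaIndep Indep d I with hΓdef
  have hcardB : ∀ B, IsBasisOf Indep B → B.card = d := fun B h => by
    rw [basis_card_eq hM h hB, Finset.card_range]
  have hncΔ : ∀ x, ∃ C, IsBasisOf Indep C ∧ x ∉ C :=
    no_coloop_of_htop hM hd hcardB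
  -- Γ is a matroid on range d
  have hMΓ : IsMatroidOn d Γ := by
    refine ⟨⟨Finset.empty_subset _, by simpa using hI⟩, fun G hG => hG.1, ?_, ?_⟩
    · intro G H hGH hH
      exact ⟨hGH.trans hH.1, hM.2.2.1 _ _ (Finset.union_subset_union_left hGH) hH.2⟩
    · intro G G' hGi hG'i hlt
      have hdG : Disjoint G I := (hdisj.mono_right hGi.1).symm
      have hdG' : Disjoint G' I := (hdisj.mono_right hG'i.1).symm
      obtain ⟨v, hv, hvi⟩ := hM.2.2.2 (G ∪ I) (G' ∪ I) hGi.2 hG'i.2 (by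
        rw [Finset.card_union_of_disjoint hdG, Finset.card_union_of_disjoint hdG']
        omega)
      rw [Finset.mem_sdiff, Finset.mem_union] at hv
      have hvG' : v ∈ G' := by
        rcases hv.1 with h | h
        · exact h
        · exact absurd (Finset.mem_union_right _ h) hv.2
      refine ⟨v, Finset.mem_sdiff.mpr ⟨hvG', fun h => hv.2 (Finset.mem_union_left _ h)⟩,
        Finset.insert_subset (hG'i.1 hvG') hGi.1, ?_⟩
      rw [Finset.insert_union]
      exact hvi
  -- a Δ-basis between I and (range d) ∪ I yields a Γ-basis of the right size
  have key : ∀ B1, IsBasisOf Indep B1 → I ⊆ B1 → B1 ⊆ Finset.range d ∪ I →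
      IsBasisOf Γ (B1 \ I) ∧ (B1 \ I).card = d - I.card := by
    intro B1 hB1 hIB1 hB1sub
    have hsubd : B1 \ I ⊆ Finset.range d := by
      intro z hz
      rw [Finset.mem_sdiff] at hz
      rcases Finset.mem_union.mp (hB1sub hz.1) with h | h
      · exact h
      · exact absurd h hz.2
    have hun : (B1 \ I) ∪ I = B1 := by
      rw [Finset.sdiff_union_self_eq_union, Finset.union_eq_left.mpr hIB1]
    have hGind : Γ (B1 \ I) := ⟨hsubd, by rw [hun]; exact hB1.1⟩
    constructor
    · refine ⟨hGind, fun C hC hsub => ?_⟩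
      have hCIB : C ∪ I = B1 := hB1.2 _ hC.2 (by
        rw [← hun]; exact Finset.union_subset_union_left hsub)
      apply Finset.Subset.antisymm _ hsub
      intro c hc
      rw [Finset.mem_sdiff]
      exact ⟨hCIB ▸ Finset.mem_union_left _ hc,
        fun hcI => (Finset.disjoint_left.mp hdisj.symm (hC.1 hc)) hcI⟩
    · rw [Finset.card_sdiff_of_subset hIB1, hcardB B1 hB1]
  -- build one Γ-basis
  obtain ⟨B1, hB1, hIB1, hB1sub⟩ :=
    extend_to_basis hM hB ((Finset.range d).card) I hI (Nat.sub_le _ _)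
  have hkey := key B1 hB1 hIB1 (by rw [Finset.union_comm]; exact hB1sub)
  -- Γ has a coloop x
  have hx : ∃ x, ∀ C, IsBasisOf Γ C → x ∈ C := by
    by_contra hcon
    push_neg at hcon
    have h := htop_ne_zero hMΓ hkey.1 hcon
    rw [hkey.2] at h
    exact h hG
  obtain ⟨x, hx⟩ := hx
  have hxI : x ∉ I := (Finset.mem_sdiff.mp (hx _ hkey.1)).2
  -- a Δ-basis avoiding x, extend I inside it
  obtain ⟨D, hD, hxD⟩ := hncΔ x
  obtain ⟨B2, hB2, hIB2, hB2sub⟩ := extend_to_basis hM hD D.card I hI (Nat.sub_le _ _)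
  have hxB2 : x ∉ B2 := fun h => by
    rcases Finset.mem_union.mp (hB2sub h) with h' | h'
    · exact hxI h'
    · exact hxD h'
  by_cases hall : ∀ z ∈ B2, z ∈ Finset.range d ∪ I
  · exfalso
    have hkey2 := key B2 hB2 hIB2 hall
    exact hxB2 (Finset.mem_sdiff.mp (hx _ hkey2.1)).1
  · push_neg at hall
    obtain ⟨z, hzB2, hz⟩ := hall
    rw [Finset.mem_union] at hz
    push_neg at hz
    refine ⟨z, hM.2.1 _ hB2.1 hzB2, hz.1, hz.2, ?_⟩
    exact hM.2.2.1 _ _ (Finset.insert_subset hzB2 hIB2) hB2.1
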